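/- Let Z be the decision task with A = [0,1] and U(a,y) = 1 - (a-y)². Let D be the calibrated distribution where p is uniform on [1/3, 2/3] and y ~ Bernoulli(p). Let S be the empirical distribution of T i.i.d. samples (p_t, y_t) from D. Then almost surely, the swap regret of the identity response function r*(p) = p on S satisfies SR_Z(r*, S) = (1/T)·Σ_t (p_t - y_t)² ≥ 1/9. Consequently, CDL(S) ≥ 1/9 for every sample size T. -/

import Mathlib

open MeasureTheory
open scoped ENNReal

/-- The calibrated distribution of `(p, y)` where `p` is uniform on `[1/3, 2/3]`
and `y ~ Bernoulli(p)`. -/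
noncomputable def mu15 : Measure (ℝ × ℝ) :=
  ((3 : ℝ≥0∞) • volume.restrict (Set.Icc (1/3 : ℝ) (2/3))).bind
    (fun p => (ENNReal.ofReal p) • Measure.dirac (p, (1 : ℝ))
      + (ENNReal.ofReal (1 - p)) • Measure.dirac (p, (0 : ℝ)))

/-- Swap regret of the identity (best-response) function for the squared-loss task
`U(a,y) = 1 - (a-y)²` on the empirical distribution of the sample `s`:
`sup_{σ : [0,1]→[0,1]} (1/T) Σ_t [(p_t - y_t)² - (σ(p_t) - y_t)²]`. -/
noncomputable def SR15 (T : ℕ) (s : Fin T → ℝ × ℝ) : ℝ :=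
  sSup { x : ℝ | ∃ σ : ℝ → ℝ, (∀ t, σ t ∈ Set.Icc (0:ℝ) 1) ∧
    x = (1 / (T : ℝ)) *
      ∑ t : Fin T, (((s t).1 - (s t).2) ^ 2 - (σ (s t).1 - (s t).2) ^ 2) }

/-!
Almost surely every sampled prediction lies in `[1/3, 2/3]`, every label in `{0, 1}`, and the
predictions are pairwise distinct: the prediction has an atomless law and the coordinates of a
product measure are independent. Distinct predictions let a swap function send each `p_t` to its
own label, which attains the trivial upper bound `(1/T) Σ (p_t - y_t)²`, and every term of that
sum is at least `1/9`.
-/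

open Set Function ProbabilityTheory

theorem SR15_eq_of_injective {T : ℕ} {s : Fin T → ℝ × ℝ} (hinj : Injective fun t => (s t).1)
    (hy : ∀ t, (s t).2 ∈ Icc (0 : ℝ) 1) :
    SR15 T s = (1 / (T : ℝ)) * ∑ t : Fin T, ((s t).1 - (s t).2) ^ 2 := by
  -- the swap function sending each (distinct) `p_t` to `y_t` zeroes the second square
  refine IsGreatest.csSup_eq ⟨⟨extend (fun t => (s t).1) (fun t => (s t).2) 0, ?_, ?_⟩, ?_⟩
  · intro x
    rcases range_extend_subset _ _ _ (mem_range_self x) with ⟨t, ht⟩ | ⟨_, _, hx⟩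
    · exact ht ▸ hy t
    · simp [← hx]
  · simp [hinj.extend_apply]
  · rintro x ⟨σ, -, rfl⟩
    gcongr with t
    nlinarith [sq_nonneg (σ (s t).1 - (s t).2)]

theorem le_mean_of_forall_le {T : ℕ} (hT : 0 < T) {c : ℝ} {f : Fin T → ℝ} (h : ∀ t, c ≤ f t) :
    c ≤ (1 / (T : ℝ)) * ∑ t, f t := by
  have hsum : T • c ≤ ∑ t, f t := by
    simpa using Finset.card_nsmul_le_sum Finset.univ f c fun t _ => h t
  rw [nsmul_eq_mul] at hsum
  rw [one_div, le_inv_mul_iff₀ (by exact_mod_cast hT)]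
  exact hsum

theorem one_ninth_le_sq_sub {p y : ℝ} (hp : p ∈ Icc (1 / 3 : ℝ) (2 / 3)) (hy : y = 0 ∨ y = 1) :
    1 / 9 ≤ (p - y) ^ 2 := by
  obtain ⟨hl, hr⟩ := hp
  rcases hy with rfl | rfl <;> nlinarith

section Bind

variable {α β : Type*} [MeasurableSpace α] [MeasurableSpace β]

theorem ae_bind_of_ae_ae {ν : Measure α} {κ : α → Measure β} (hκ : AEMeasurable κ ν)
    {P : β → Prop} (hP : MeasurableSet {b | P b}) (h : ∀ᵐ a ∂ν, ∀ᵐ b ∂κ a, P b) :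
    ∀ᵐ b ∂ν.bind κ, P b := by
  rw [ae_iff, ← compl_ofPred, Measure.bind_apply hP.compl hκ]
  exact (lintegral_congr_ae (h.mono fun a ha => ae_iff.mp ha)).trans lintegral_zero

end Bind

section Diagonal

variable {ι Ω β : Type*} [MeasurableSpace Ω] [MeasurableSpace β]

theorem measure_prod_diagonal_eq_zero [MeasurableEq β] {ν : Measure β} [SFinite ν]
    (hatom : ∀ c, ν {c} = 0) : (ν.prod ν) (diagonal β) = 0 := by
  rw [Measure.measure_prod_null measurableSet_diagonal]
  refine Filter.Eventually.of_forall fun c => ?_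
  have hfiber : Prod.mk c ⁻¹' diagonal β = {c} := by ext; simp [eq_comm]
  simp only [Pi.zero_apply, hfiber, hatom]

variable [Fintype ι] {μ : Measure Ω} [IsProbabilityMeasure μ] {f : Ω → β}

theorem map_pi_comp_eval (hf : Measurable f) (k : ι) :
    (Measure.pi fun _ : ι => μ).map (fun s => f (s k)) = μ.map f := by
  conv_rhs => rw [← (measurePreserving_eval (fun _ : ι => μ) k).map_eq]
  rw [Measure.map_map hf (measurable_pi_apply k)]
  rfl

theorem ae_pi_comp_apply_ne [MeasurableEq β] (hf : Measurable f)
    (hatom : ∀ c, μ (f ⁻¹' {c}) = 0) {i j : ι} (hij : i ≠ j) :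
    ∀ᵐ s ∂Measure.pi fun _ : ι => μ, f (s i) ≠ f (s j) := by
  have hcoord : ∀ k, Measurable fun s : ι → Ω => f (s k) := fun k =>
    hf.comp (measurable_pi_apply k)
  have hlaw : (Measure.pi fun _ : ι => μ).map (fun s => (f (s i), f (s j)))
      = (μ.map f).prod (μ.map f) := by
    have hindep := (iIndepFun_pi (μ := fun _ : ι => μ) (X := fun _ => f)
      fun _ => hf.aemeasurable).indepFun hij
    rw [indepFun_iff_map_prod_eq_prod_map_map (hcoord i).aemeasurable
      (hcoord j).aemeasurable, map_pi_comp_eval hf i, map_pi_comp_eval hf j] at hindep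
    exact hindep
  have hnull := measure_prod_diagonal_eq_zero (ν := μ.map f) fun c => by
    rw [Measure.map_apply hf (measurableSet_singleton c), hatom]
  rw [← hlaw, Measure.map_apply ((hcoord i).prodMk (hcoord j)) measurableSet_diagonal] at hnull
  rw [ae_iff]
  simp only [ne_eq, not_not]
  exact hnull

theorem ae_pi_injective_comp [MeasurableEq β] (hf : Measurable f)
    (hatom : ∀ c, μ (f ⁻¹' {c}) = 0) :
    ∀ᵐ s ∂Measure.pi fun _ : ι => μ, Injective fun i => f (s i) := by
  have hall : ∀ᵐ s ∂Measure.pi fun _ : ι => μ, ∀ i j, i ≠ j → f (s i) ≠ f (s j) := by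
    refine ae_all_iff.2 fun i => ae_all_iff.2 fun j => ?_
    by_cases hij : i = j
    · exact Filter.Eventually.of_forall fun _ h => absurd hij h
    · exact (ae_pi_comp_apply_ne hf hatom hij).mono fun _ h _ => h
  filter_upwards [hall] with s hs i j hf
  by_contra hij
  exact hs i j hij hf

end Diagonal

noncomputable def uniformThirds : Measure ℝ := (3 : ℝ≥0∞) • volume.restrict (Icc (1/3 : ℝ) (2/3))

noncomputable def labelKernel (p : ℝ) : Measure (ℝ × ℝ) :=
  ENNReal.ofReal p • Measure.dirac (p, (1 : ℝ))
    + ENNReal.ofReal (1 - p) • Measure.dirac (p, (0 : ℝ))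

theorem mu15_eq_bind : mu15 = uniformThirds.bind labelKernel := rfl

theorem measurable_labelKernel : Measurable labelKernel := by
  refine Measure.measurable_of_measurable_coe _ fun s hs => ?_
  simp only [labelKernel, Measure.coe_add, Measure.coe_smul, Pi.add_apply, Pi.smul_apply,
    Measure.dirac_apply' _ hs, smul_eq_mul]
  have hmk : ∀ y : ℝ, Measurable fun p : ℝ => s.indicator (1 : ℝ × ℝ → ℝ≥0∞) (p, y) := fun y =>
    (measurable_one.indicator hs).comp (measurable_id.prodMk measurable_const)
  exact (ENNReal.measurable_ofReal.mul (hmk 1)).add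
    ((ENNReal.measurable_ofReal.comp (measurable_const.sub measurable_id)).mul (hmk 0))

theorem ae_labelKernel (p : ℝ) : ∀ᵐ z ∂labelKernel p, z.1 = p ∧ (z.2 = 0 ∨ z.2 = 1) := by
  have hmeas : MeasurableSet {z : ℝ × ℝ | z.1 = p ∧ (z.2 = 0 ∨ z.2 = 1)} := by measurability
  exact ae_add_measure_iff.2
    ⟨Measure.ae_smul_measure ((ae_dirac_iff hmeas).2 ⟨rfl, Or.inr rfl⟩) _,
      Measure.ae_smul_measure ((ae_dirac_iff hmeas).2 ⟨rfl, Or.inl rfl⟩) _⟩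

theorem labelKernel_univ {p : ℝ} (hp : p ∈ Icc (0 : ℝ) 1) : labelKernel p univ = 1 := by
  simp only [labelKernel, Measure.coe_add, Measure.coe_smul, Pi.add_apply, Pi.smul_apply,
    measure_univ, smul_eq_mul, mul_one]
  rw [← ENNReal.ofReal_add hp.1 (sub_nonneg.2 hp.2), add_sub_cancel, ENNReal.ofReal_one]

theorem uniformThirds_univ : uniformThirds univ = 1 := by
  simp only [uniformThirds, Measure.coe_smul, Pi.smul_apply, Measure.restrict_apply_univ,
    Real.volume_Icc, smul_eq_mul]
  rw [show (2 / 3 - 1 / 3 : ℝ) = 3⁻¹ by norm_num, ENNReal.ofReal_inv_of_pos (by norm_num)]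
  simpa using ENNReal.mul_inv_cancel (by norm_num : (3 : ℝ≥0∞) ≠ 0) (by norm_num)

theorem ae_uniformThirds_mem : ∀ᵐ p ∂uniformThirds, p ∈ Icc (1/3 : ℝ) (2/3) :=
  Measure.ae_smul_measure (ae_restrict_mem measurableSet_Icc) 3

theorem uniformThirds_singleton (c : ℝ) : uniformThirds {c} = 0 := by
  simp [uniformThirds]

instance : IsProbabilityMeasure mu15 := by
  constructor
  rw [mu15_eq_bind, Measure.bind_apply MeasurableSet.univ measurable_labelKernel.aemeasurable,
    lintegral_congr_ae (ae_uniformThirds_mem.mono fun p hp => labelKernel_univ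
      ⟨by linarith [hp.1], by linarith [hp.2]⟩), lintegral_const, uniformThirds_univ, one_mul]

theorem ae_mu15_of_ae_uniformThirds {S : Set ℝ} (hS : MeasurableSet S)
    (h : ∀ᵐ p ∂uniformThirds, p ∈ S) : ∀ᵐ z ∂mu15, z.1 ∈ S ∧ (z.2 = 0 ∨ z.2 = 1) := by
  refine ae_bind_of_ae_ae measurable_labelKernel.aemeasurable (by measurability) ?_
  filter_upwards [h] with p hp
  filter_upwards [ae_labelKernel p] with z ⟨hz, hy⟩
  exact ⟨hz ▸ hp, hy⟩

theorem mu15_fst_preimage_singleton (c : ℝ) : mu15 (Prod.fst ⁻¹' {c}) = 0 := by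
  have h := ae_mu15_of_ae_uniformThirds (measurableSet_singleton c).compl
    (measure_eq_zero_iff_ae_notMem.1 (uniformThirds_singleton c))
  refine measure_mono_null ?_ (ae_iff.1 h)
  intro z hz h'
  exact h'.1 hz

/-- for `T` i.i.d. samples from the calibrated distribution `mu15`,
almost surely the swap regret of the identity response equals
`(1/T)·Σ_t (p_t - y_t)²`, which is at least `1/9`; consequently any quantity
(such as `CDL` of the sample) upper-bounding this swap regret is at least `1/9`. -/
theorem empirical_cdl_lower_bound (T : ℕ) (hT : 0 < T) :
    ∀ᵐ s ∂(Measure.pi fun _ : Fin T => mu15),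
      SR15 T s = (1 / (T : ℝ)) * ∑ t : Fin T, ((s t).1 - (s t).2) ^ 2
      ∧ (1 / 9 : ℝ) ≤ SR15 T s
      ∧ ∀ CDL : ℝ, SR15 T s ≤ CDL → (1 / 9 : ℝ) ≤ CDL := by
  have hsupport : ∀ᵐ s ∂(Measure.pi fun _ : Fin T => mu15),
      ∀ t, (s t).1 ∈ Icc (1 / 3 : ℝ) (2 / 3) ∧ ((s t).2 = 0 ∨ (s t).2 = 1) :=
    ae_all_iff.2 fun t =>
      (measurePreserving_eval (fun _ : Fin T => mu15) t).quasiMeasurePreserving.ae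
        (ae_mu15_of_ae_uniformThirds measurableSet_Icc ae_uniformThirds_mem)
  filter_upwards [hsupport, ae_pi_injective_comp measurable_fst mu15_fst_preimage_singleton]
    with s hs hinj
  have hlabel : ∀ t, (s t).2 ∈ Icc (0 : ℝ) 1 := fun t => by
    rcases (hs t).2 with h | h <;> simp [h]
  have hSR := SR15_eq_of_injective hinj hlabel
  have hbound : 1 / 9 ≤ SR15 T s :=
    hSR ▸ le_mean_of_forall_le hT fun t => one_ninth_le_sq_sub (hs t).1 (hs t).2
  exact ⟨hSR, hbound, fun _ h => hbound.trans h⟩
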